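/- arXiv:1709.01849 — 2 statements merged into one kernel-verified Lean document; each statement's English description precedes it below -/
import Mathlib

section
/- Let K be a finite Kripke structure, ρ and ρ' be two tracks over K, and ψ be a formula of the HS fragment AĀBB̄Ē with nestB(ψ)=k. If ρ ∼k ρ' (ρ and ρ' have the same B_k-descriptor), then K,ρ ⊨ ψ if and only if K,ρ' ⊨ ψ. -/
open Classical

universe u v

structure KripkeStructure (AP : Type u) (W : Type v) where
  delta : W → W → Prop
  leftTotal : ∀ w, ∃ w', delta w w'
  mu : W → Set AP
  init : W

variable {AP : Type u} {W : Type v}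

/-- A track over a Kripke structure: a finite sequence of at least two states
respecting the transition relation. -/
def IsTrack (K : KripkeStructure AP W) (ρ : List W) : Prop :=
  2 ≤ ρ.length ∧ ρ.Chain' K.delta

/-- `σ` is a proper prefix (of length at least 2) of `ρ`, i.e. `σ ∈ Pref(ρ)`. -/
def ProperPrefix (σ ρ : List W) : Prop :=
  σ <+: ρ ∧ σ ≠ ρ ∧ 2 ≤ σ.length

/-- `σ` is a proper suffix (of length at least 2) of `ρ`, i.e. `σ ∈ Suff(ρ)`. -/
def ProperSuffix (σ ρ : List W) : Prop :=
  σ <:+ ρ ∧ σ ≠ ρ ∧ 2 ≤ σ.length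

/-- Formulas of the HS fragment AĀBB̄Ē. -/
inductive HSFormula (AP : Type u) : Type u where
  | prop (p : AP)
  | neg (φ : HSFormula AP)
  | and (φ ψ : HSFormula AP)
  | modA (φ : HSFormula AP)
  | modAbar (φ : HSFormula AP)
  | modB (φ : HSFormula AP)
  | modBbar (φ : HSFormula AP)
  | modEbar (φ : HSFormula AP)

/-- Satisfaction of an HS formula by a track, under the homogeneity assumption. -/
def sat (K : KripkeStructure AP W) : HSFormula AP → List W → Prop
  | .prop p, ρ => ∀ w ∈ ρ, p ∈ K.mu w
  | .neg φ, ρ => ¬ sat K φ ρ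
  | .and φ ψ, ρ => sat K φ ρ ∧ sat K ψ ρ
  | .modA φ, ρ => ∃ σ, IsTrack K σ ∧ σ.head? = ρ.getLast? ∧ sat K φ σ
  | .modAbar φ, ρ => ∃ σ, IsTrack K σ ∧ σ.getLast? = ρ.head? ∧ sat K φ σ
  | .modB φ, ρ => ∃ σ, ProperPrefix σ ρ ∧ sat K φ σ
  | .modBbar φ, ρ => ∃ σ, IsTrack K σ ∧ ProperPrefix ρ σ ∧ sat K φ σ
  | .modEbar φ, ρ => ∃ σ, IsTrack K σ ∧ ProperSuffix ρ σ ∧ sat K φ σ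

/-- The B-nesting depth of an AĀBB̄Ē formula. -/
def nestB : HSFormula AP → ℕ
  | .prop _ => 0
  | .neg φ => nestB φ
  | .and φ ψ => max (nestB φ) (nestB ψ)
  | .modA φ => nestB φ
  | .modAbar φ => nestB φ
  | .modB φ => 1 + nestB φ
  | .modBbar φ => nestB φ
  | .modEbar φ => nestB φ

/-- A descriptor element: (initial state, set of internal states, final state). -/
abbrev DescEl (W : Type v) : Type v := W × Set W × W

noncomputable def headW [Nonempty W] (ρ : List W) : W :=
  ρ.headD (Classical.arbitrary W)

noncomputable def lastW [Nonempty W] (ρ : List W) : W :=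
  ρ.getLastD (Classical.arbitrary W)

/-- The set of internal states of a track. -/
def intStates (ρ : List W) : Set W := {w | w ∈ (ρ.drop 1).dropLast}

/-- The descriptor element associated with a track. -/
noncomputable def descEl [Nonempty W] (ρ : List W) : DescEl W :=
  (headW ρ, intStates ρ, lastW ρ)

/-- The type of B_k-descriptors (trees of depth `k` represented hereditarily as
sets of subtrees, which identifies isomorphic descriptors). -/
def BDesc (W : Type v) : ℕ → Type v
  | 0 => DescEl W
  | k + 1 => DescEl W × Set (BDesc W k)

/-- The B_k-descriptor of a track: the root is labelled by the descriptor element of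
the track and, for `k > 0`, the subtrees of the root are exactly (one copy each)
the B_(k-1)-descriptors of the proper prefixes of the track. Two tracks are
k-descriptor equivalent (`ρ ∼k ρ'`) iff `bDesc k ρ = bDesc k ρ'`. -/
noncomputable def bDesc [Nonempty W] : (k : ℕ) → List W → BDesc W k
  | 0, ρ => descEl ρ
  | k + 1, ρ => (descEl ρ, {d | ∃ σ, ProperPrefix σ ρ ∧ d = bDesc k σ})

/-!
The descriptor element of a track fixes its first state, its last state and the set of its
states, which is all that propositions, `⟨A⟩` and `⟨Ā⟩` can observe. The subtrees of the
`B_(k+1)`-descriptor match every proper prefix with a proper prefix of the other track having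
the same `B_k`-descriptor, which handles `⟨B⟩`. Finally, equality of `B_k`-descriptors is
preserved by appending the same states on the right or on the left of both tracks, which
handles `⟨B̄⟩` and `⟨Ē⟩`; the theorem follows by induction on the formula.
-/

lemma List.prefix_of_length_le_one_of_head?_eq {α : Type*} {t l l' : List α} (ht : t <+: l)
    (h1 : t.length ≤ 1) (hh : l.head? = l'.head?) : t <+: l' := by
  rw [List.prefix_iff_eq_take] at ht
  rw [ht]
  rcases Nat.le_one_iff_eq_zero_or_eq_one.1 h1 with h0 | h1
  · simp [h0]
  · rw [h1, List.take_one, hh, ← List.take_one]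
    exact List.take_prefix 1 l'

lemma List.prefix_append_cases {α : Type*} {l₁ l₂ l₃ : List α} (h : l₁ <+: l₂ ++ l₃) :
    (l₁ <+: l₂ ∧ l₁.length < l₂.length) ∨ ∃ t, l₁ = l₂ ++ t ∧ t <+: l₃ := by
  rcases lt_or_ge l₁.length l₂.length with hlt | hge
  · exact Or.inl ⟨List.prefix_of_prefix_length_le h (l₂.prefix_append l₃) hlt.le, hlt⟩
  · obtain ⟨t, rfl⟩ := List.prefix_of_prefix_length_le (l₂.prefix_append l₃) h hge
    exact Or.inr ⟨t, rfl, (List.prefix_append_right_inj l₂).1 h⟩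

lemma List.exists_eq_cons_cons {α : Type*} {l : List α} (h : 2 ≤ l.length) :
    ∃ a b t, l = a :: b :: t := by
  match l, h with
  | a :: b :: t, _ => exact ⟨a, b, t, rfl⟩

section Tracks

variable {σ ρ : List W}

lemma properPrefix_iff :
    ProperPrefix σ ρ ↔ σ <+: ρ ∧ σ.length < ρ.length ∧ 2 ≤ σ.length := by
  refine ⟨fun ⟨h, hne, h2⟩ => ⟨h, ?_, h2⟩, fun ⟨h, hlt, h2⟩ => ⟨h, ?_, h2⟩⟩
  · exact h.length_le.lt_of_ne fun e => hne (h.eq_of_length e)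
  · rintro rfl
    exact hlt.false

lemma properSuffix_iff :
    ProperSuffix σ ρ ↔ σ <:+ ρ ∧ σ.length < ρ.length ∧ 2 ≤ σ.length := by
  refine ⟨fun ⟨h, hne, h2⟩ => ⟨h, ?_, h2⟩, fun ⟨h, hlt, h2⟩ => ⟨h, ?_, h2⟩⟩
  · exact h.length_le.lt_of_ne fun e => hne (h.eq_of_length e)
  · rintro rfl
    exact hlt.false

lemma ProperPrefix.trans_prefix {τ : List W} (h : ProperPrefix σ ρ) (hρ : ρ <+: τ) :
    ProperPrefix σ τ := by
  rw [properPrefix_iff] at h ⊢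
  exact ⟨h.1.trans hρ, h.2.1.trans_le hρ.length_le, h.2.2⟩

variable {K : KripkeStructure AP W}

lemma ProperPrefix.isTrack (h : ProperPrefix σ ρ) (hρ : IsTrack K ρ) : IsTrack K σ :=
  ⟨h.2.2, hρ.2.prefix h.1⟩

lemma IsTrack.append_of_getLast?_eq {ρ' τ : List W} (h : IsTrack K (ρ ++ τ))
    (hρ' : IsTrack K ρ') (hl : ρ.getLast? = ρ'.getLast?) : IsTrack K (ρ' ++ τ) := by
  obtain ⟨-, hτ, hjoin⟩ := List.isChain_append.1 h.2
  refine ⟨hρ'.1.trans (by simp), List.isChain_append.2 ⟨hρ'.2, hτ, ?_⟩⟩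
  rwa [← hl]

lemma IsTrack.append_of_head?_eq {ρ' τ : List W} (h : IsTrack K (τ ++ ρ))
    (hρ' : IsTrack K ρ') (hl : ρ.head? = ρ'.head?) : IsTrack K (τ ++ ρ') := by
  obtain ⟨hτ, -, hjoin⟩ := List.isChain_append.1 h.2
  refine ⟨hρ'.1.trans (by simp), List.isChain_append.2 ⟨hτ, hρ'.2, ?_⟩⟩
  rwa [← hl]

lemma mem_intStates_append {τ : List W} {w : W} (hρ : ρ ≠ []) (hτ : τ ≠ []) :
    w ∈ intStates (ρ ++ τ) ↔ w ∈ ρ.drop 1 ∨ w ∈ τ.dropLast := by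
  rw [intStates, Set.mem_ofPred_eq, List.drop_append_of_le_length (List.length_pos_iff.2 hρ),
    List.dropLast_append_of_ne_nil hτ, List.mem_append]

end Tracks

section DescriptorElements

variable [Nonempty W] {ρ ρ' τ : List W} {w : W}

lemma head?_eq_some_headW (h : ρ ≠ []) : ρ.head? = some (headW ρ) := by
  cases ρ with
  | nil => contradiction
  | cons a l => rfl

lemma getLast?_eq_some_lastW (h : ρ ≠ []) : ρ.getLast? = some (lastW ρ) := by
  simp [lastW, List.getLast?_eq_some_getLast h]

lemma headW_append (h : ρ ≠ []) : headW (ρ ++ τ) = headW ρ := by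
  cases ρ with
  | nil => contradiction
  | cons a l => rfl

lemma lastW_append (h : τ ≠ []) : lastW (ρ ++ τ) = lastW τ := by
  simp [lastW, List.getLastD_eq_getLast?, List.getLast?_append_of_ne_nil _ h]

lemma mem_iff_mem_dropLast_or_eq_lastW (h : ρ ≠ []) :
    w ∈ ρ ↔ w ∈ ρ.dropLast ∨ w = lastW ρ := by
  conv_lhs => rw [← List.dropLast_append_getLast h]
  simp [lastW, List.getLastD_eq_getLast?, List.getLast?_eq_some_getLast h]

lemma mem_dropLast_iff (h : 2 ≤ ρ.length) :
    w ∈ ρ.dropLast ↔ w = headW ρ ∨ w ∈ intStates ρ := by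
  obtain ⟨a, b, l, rfl⟩ := List.exists_eq_cons_cons h
  simp [headW, intStates]

lemma mem_drop_one_iff (h : 2 ≤ ρ.length) :
    w ∈ ρ.drop 1 ↔ w ∈ intStates ρ ∨ w = lastW ρ := by
  obtain ⟨a, b, l, rfl⟩ := List.exists_eq_cons_cons h
  rw [show lastW (a :: b :: l) = lastW (b :: l) by simp [lastW]]
  exact mem_iff_mem_dropLast_or_eq_lastW (List.cons_ne_nil b l)

lemma mem_iff_eq_headW_or_mem_drop_one (h : 2 ≤ ρ.length) :
    w ∈ ρ ↔ w = headW ρ ∨ w ∈ ρ.drop 1 := by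
  obtain ⟨a, b, l, rfl⟩ := List.exists_eq_cons_cons h
  simp [headW]

lemma descEl_eq_iff :
    descEl ρ = descEl ρ' ↔
      headW ρ = headW ρ' ∧ intStates ρ = intStates ρ' ∧ lastW ρ = lastW ρ' := by
  simp only [descEl, Prod.mk.injEq]

section Congr

variable (h : 2 ≤ ρ.length) (h' : 2 ≤ ρ'.length) (hd : descEl ρ = descEl ρ')
include h h' hd

lemma head?_eq_of_descEl_eq : ρ.head? = ρ'.head? := by
  rw [head?_eq_some_headW (List.ne_nil_of_length_pos (by omega)),
    head?_eq_some_headW (List.ne_nil_of_length_pos (by omega)), (descEl_eq_iff.1 hd).1]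

lemma getLast?_eq_of_descEl_eq : ρ.getLast? = ρ'.getLast? := by
  rw [getLast?_eq_some_lastW (List.ne_nil_of_length_pos (by omega)),
    getLast?_eq_some_lastW (List.ne_nil_of_length_pos (by omega)), (descEl_eq_iff.1 hd).2.2]

lemma mem_dropLast_iff_of_descEl_eq : w ∈ ρ.dropLast ↔ w ∈ ρ'.dropLast := by
  obtain ⟨hh, hi, -⟩ := descEl_eq_iff.1 hd
  rw [mem_dropLast_iff h, mem_dropLast_iff h', hh, hi]

lemma mem_drop_one_iff_of_descEl_eq : w ∈ ρ.drop 1 ↔ w ∈ ρ'.drop 1 := by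
  obtain ⟨-, hi, hl⟩ := descEl_eq_iff.1 hd
  rw [mem_drop_one_iff h, mem_drop_one_iff h', hl, hi]

lemma mem_iff_of_descEl_eq : w ∈ ρ ↔ w ∈ ρ' := by
  rw [mem_iff_eq_headW_or_mem_drop_one h, mem_iff_eq_headW_or_mem_drop_one h',
    mem_drop_one_iff_of_descEl_eq h h' hd, (descEl_eq_iff.1 hd).1]

lemma descEl_append_right_of_descEl_eq (τ : List W) :
    descEl (ρ ++ τ) = descEl (ρ' ++ τ) := by
  rcases eq_or_ne τ [] with rfl | hτ
  · simpa using hd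
  have hρ := List.ne_nil_of_length_pos (by omega : 0 < ρ.length)
  have hρ' := List.ne_nil_of_length_pos (by omega : 0 < ρ'.length)
  refine descEl_eq_iff.2 ⟨?_, ?_, by rw [lastW_append hτ, lastW_append hτ]⟩
  · rw [headW_append hρ, headW_append hρ', (descEl_eq_iff.1 hd).1]
  · ext w
    rw [mem_intStates_append hρ hτ, mem_intStates_append hρ' hτ,
      mem_drop_one_iff_of_descEl_eq h h' hd]

lemma descEl_append_left_of_descEl_eq (τ : List W) :
    descEl (τ ++ ρ) = descEl (τ ++ ρ') := by
  rcases eq_or_ne τ [] with rfl | hτ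
  · simpa using hd
  have hρ := List.ne_nil_of_length_pos (by omega : 0 < ρ.length)
  have hρ' := List.ne_nil_of_length_pos (by omega : 0 < ρ'.length)
  refine descEl_eq_iff.2 ⟨by rw [headW_append hτ, headW_append hτ], ?_, ?_⟩
  · ext w
    rw [mem_intStates_append hτ hρ, mem_intStates_append hτ hρ',
      mem_dropLast_iff_of_descEl_eq h h' hd]
  · rw [lastW_append hρ, lastW_append hρ', (descEl_eq_iff.1 hd).2.2]

end Congr

end DescriptorElements

section Descriptors

variable [Nonempty W] {k : ℕ} {ρ ρ' : List W}

lemma descEl_eq_of_bDesc_eq (h : bDesc k ρ = bDesc k ρ') : descEl ρ = descEl ρ' := by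
  cases k with
  | zero => exact h
  | succ k => exact congrArg Prod.fst h

lemma exists_properPrefix_bDesc_eq (h : bDesc (k + 1) ρ = bDesc (k + 1) ρ') {σ : List W}
    (hσ : ProperPrefix σ ρ) : ∃ σ', ProperPrefix σ' ρ' ∧ bDesc k σ = bDesc k σ' := by
  have hmem : bDesc k σ ∈ (bDesc (k + 1) ρ).2 := ⟨σ, hσ, rfl⟩
  rw [h] at hmem
  exact hmem

lemma bDesc_succ_eq_of_prefixes_match (hd : descEl ρ = descEl ρ')
    (h : ∀ σ, ProperPrefix σ ρ → ∃ σ', ProperPrefix σ' ρ' ∧ bDesc k σ = bDesc k σ')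
    (h' : ∀ σ', ProperPrefix σ' ρ' → ∃ σ, ProperPrefix σ ρ ∧ bDesc k σ' = bDesc k σ) :
    bDesc (k + 1) ρ = bDesc (k + 1) ρ' := by
  refine Prod.ext hd (Set.ext fun d => ⟨?_, ?_⟩)
  · rintro ⟨σ, hσ, rfl⟩
    exact h σ hσ
  · rintro ⟨σ', hσ', rfl⟩
    exact h' σ' hσ'

lemma bDesc_eq_of_bDesc_succ_eq : ∀ {k : ℕ} {ρ ρ' : List W},
    bDesc (k + 1) ρ = bDesc (k + 1) ρ' → bDesc k ρ = bDesc k ρ'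
  | 0, _, _, h => descEl_eq_of_bDesc_eq h
  | _ + 1, _, _, h => bDesc_succ_eq_of_prefixes_match (descEl_eq_of_bDesc_eq h)
      (fun _ hσ => (exists_properPrefix_bDesc_eq h hσ).imp fun _ ⟨hσ', he⟩ =>
        ⟨hσ', bDesc_eq_of_bDesc_succ_eq he⟩)
      (fun _ hσ' => (exists_properPrefix_bDesc_eq h.symm hσ').imp fun _ ⟨hσ, he⟩ =>
        ⟨hσ, bDesc_eq_of_bDesc_succ_eq he⟩)

lemma bDesc_append_right : ∀ (k : ℕ) {ρ ρ' : List W} (τ : List W), 2 ≤ ρ.length →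
    2 ≤ ρ'.length → bDesc k ρ = bDesc k ρ' → bDesc k (ρ ++ τ) = bDesc k (ρ' ++ τ)
  | 0, _, _, τ, h, h', he => descEl_append_right_of_descEl_eq h h' he τ
  | k + 1, ρ, ρ', τ, h, h', he => by
    have extend : ∀ {α β : List W}, 2 ≤ α.length → 2 ≤ β.length →
        bDesc (k + 1) α = bDesc (k + 1) β → ∀ σ, ProperPrefix σ (α ++ τ) →
          ∃ σ', ProperPrefix σ' (β ++ τ) ∧ bDesc k σ = bDesc k σ' := by
      intro α β hα hβ hab σ hσ
      obtain ⟨hpre, hlt, hlen⟩ := properPrefix_iff.1 hσ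
      rcases List.prefix_append_cases hpre with ⟨hσα, hltα⟩ | ⟨t, rfl, ht⟩
      · obtain ⟨σ', hσ', he'⟩ :=
          exists_properPrefix_bDesc_eq hab (properPrefix_iff.2 ⟨hσα, hltα, hlen⟩)
        exact ⟨σ', hσ'.trans_prefix (β.prefix_append τ), he'⟩
      · refine ⟨β ++ t, properPrefix_iff.2 ⟨(List.prefix_append_right_inj β).2 ht, ?_, ?_⟩,
          bDesc_append_right k t hα hβ (bDesc_eq_of_bDesc_succ_eq hab)⟩
        · simp only [List.length_append] at hlt ⊢
          omega
        · simp only [List.length_append]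
          omega
    exact bDesc_succ_eq_of_prefixes_match
      (descEl_append_right_of_descEl_eq h h' (descEl_eq_of_bDesc_eq he) τ)
      (extend h h' he) (extend h' h he.symm)

lemma bDesc_append_left : ∀ (k : ℕ) {ρ ρ' : List W} (τ : List W), 2 ≤ ρ.length →
    2 ≤ ρ'.length → bDesc k ρ = bDesc k ρ' → bDesc k (τ ++ ρ) = bDesc k (τ ++ ρ')
  | 0, _, _, τ, h, h', he => descEl_append_left_of_descEl_eq h h' he τ
  | k + 1, ρ, ρ', τ, h, h', he => by
    have extend : ∀ {α β : List W}, 2 ≤ α.length → 2 ≤ β.length →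
        bDesc (k + 1) α = bDesc (k + 1) β → ∀ σ, ProperPrefix σ (τ ++ α) →
          ∃ σ', ProperPrefix σ' (τ ++ β) ∧ bDesc k σ = bDesc k σ' := by
      intro α β hα hβ hab σ hσ
      obtain ⟨hpre, hlt, hlen⟩ := properPrefix_iff.1 hσ
      rcases List.prefix_append_cases hpre with ⟨hστ, hltτ⟩ | ⟨t, rfl, ht⟩
      · refine ⟨σ, properPrefix_iff.2 ⟨hστ.trans (τ.prefix_append β), ?_, hlen⟩, rfl⟩
        simp only [List.length_append]
        omega
      have hltα : t.length < α.length := by simpa using hlt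
      rcases lt_or_ge t.length 2 with ht1 | ht2
      · -- `t` is too short to be a proper prefix of `α`, but it is fixed by the first state.
        have htβ : t <+: β := List.prefix_of_length_le_one_of_head?_eq ht (by omega)
          (head?_eq_of_descEl_eq hα hβ (descEl_eq_of_bDesc_eq hab))
        refine ⟨τ ++ t,
          properPrefix_iff.2 ⟨(List.prefix_append_right_inj τ).2 htβ, ?_, hlen⟩, rfl⟩
        simp only [List.length_append]
        omega
      · obtain ⟨t', ht', he'⟩ :=
          exists_properPrefix_bDesc_eq hab (properPrefix_iff.2 ⟨ht, hltα, ht2⟩)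
        obtain ⟨ht'β, hlt', hlen'⟩ := properPrefix_iff.1 ht'
        refine ⟨τ ++ t', properPrefix_iff.2 ⟨(List.prefix_append_right_inj τ).2 ht'β, ?_, ?_⟩,
          bDesc_append_left k τ ht2 hlen' he'⟩
        · simp only [List.length_append]
          omega
        · simp only [List.length_append]
          omega
    exact bDesc_succ_eq_of_prefixes_match
      (descEl_append_left_of_descEl_eq h h' (descEl_eq_of_bDesc_eq he) τ)
      (extend h h' he) (extend h' h he.symm)

end Descriptors

theorem sat_of_sat_of_bDesc_eq [Nonempty W] (K : KripkeStructure AP W) (ψ : HSFormula AP)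
    {k : ℕ} {ρ ρ' : List W} (hk : nestB ψ ≤ k) (hρ : IsTrack K ρ) (hρ' : IsTrack K ρ')
    (he : bDesc k ρ = bDesc k ρ') (hs : sat K ψ ρ) : sat K ψ ρ' := by
  induction ψ generalizing k ρ ρ' with
  | prop _ =>
    exact fun w hw => hs w ((mem_iff_of_descEl_eq hρ.1 hρ'.1 (descEl_eq_of_bDesc_eq he)).2 hw)
  | neg φ ih =>
    exact fun hs' => hs (ih hk hρ' hρ he.symm hs')
  | and φ χ ihφ ihχ =>
    obtain ⟨hkφ, hkχ⟩ := max_le_iff.1 hk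
    exact ⟨ihφ hkφ hρ hρ' he hs.1, ihχ hkχ hρ hρ' he hs.2⟩
  | modA _ =>
    obtain ⟨σ, hσ, hjoin, hsσ⟩ := hs
    exact ⟨σ, hσ, hjoin.trans (getLast?_eq_of_descEl_eq hρ.1 hρ'.1 (descEl_eq_of_bDesc_eq he)),
      hsσ⟩
  | modAbar _ =>
    obtain ⟨σ, hσ, hjoin, hsσ⟩ := hs
    exact ⟨σ, hσ, hjoin.trans (head?_eq_of_descEl_eq hρ.1 hρ'.1 (descEl_eq_of_bDesc_eq he)),
      hsσ⟩
  | modB φ ih =>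
    obtain _ | k := k
    · simp [nestB] at hk
    obtain ⟨σ, hσ, hsσ⟩ := hs
    obtain ⟨σ', hσ', he'⟩ := exists_properPrefix_bDesc_eq he hσ
    exact ⟨σ', hσ', ih (by simp only [nestB] at hk; omega) (hσ.isTrack hρ) (hσ'.isTrack hρ')
      he' hsσ⟩
  | modBbar φ ih =>
    obtain ⟨_, hσ, hpre, hsσ⟩ := hs
    obtain ⟨⟨t, rfl⟩, hlt, -⟩ := properPrefix_iff.1 hpre
    have hσ' : IsTrack K (ρ' ++ t) := hσ.append_of_getLast?_eq hρ'
      (getLast?_eq_of_descEl_eq hρ.1 hρ'.1 (descEl_eq_of_bDesc_eq he))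
    refine ⟨ρ' ++ t, hσ', properPrefix_iff.2 ⟨ρ'.prefix_append t, ?_, hρ'.1⟩,
      ih hk hσ hσ' (bDesc_append_right k t hρ.1 hρ'.1 he) hsσ⟩
    simp only [List.length_append] at hlt ⊢
    omega
  | modEbar φ ih =>
    obtain ⟨_, hσ, hsuf, hsσ⟩ := hs
    obtain ⟨⟨t, rfl⟩, hlt, -⟩ := properSuffix_iff.1 hsuf
    have hσ' : IsTrack K (t ++ ρ') := hσ.append_of_head?_eq hρ'
      (head?_eq_of_descEl_eq hρ.1 hρ'.1 (descEl_eq_of_bDesc_eq he))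
    refine ⟨t ++ ρ', hσ', properSuffix_iff.2 ⟨t.suffix_append ρ', ?_, hρ'.1⟩,
      ih hk hσ hσ' (bDesc_append_left k t hρ.1 hρ'.1 he) hsσ⟩
    simp only [List.length_append] at hlt ⊢
    omega

theorem sat_of_bDesc_eq_general [Nonempty W] (K : KripkeStructure AP W)
    (ρ ρ' : List W) (hρ : IsTrack K ρ) (hρ' : IsTrack K ρ')
    (ψ : HSFormula AP) (k : ℕ) (hk : nestB ψ = k)
    (he : bDesc k ρ = bDesc k ρ') :
    sat K ψ ρ ↔ sat K ψ ρ' :=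
  ⟨sat_of_sat_of_bDesc_eq K ψ hk.le hρ hρ' he, sat_of_sat_of_bDesc_eq K ψ hk.le hρ' hρ he.symm⟩

/-- if two tracks have the same B_k-descriptor, then they satisfy the
same AĀBB̄Ē formulas of B-nesting depth `k`. -/
theorem sat_of_bDesc_eq [Fintype W] [Nonempty W] (K : KripkeStructure AP W)
    (ρ ρ' : List W) (hρ : IsTrack K ρ) (hρ' : IsTrack K ρ')
    (ψ : HSFormula AP) (k : ℕ) (hk : nestB ψ = k)
    (he : bDesc k ρ = bDesc k ρ') :
    sat K ψ ρ ↔ sat K ψ ρ' :=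
  sat_of_bDesc_eq_general K ρ ρ' hρ hρ' ψ k hk he
end

section
/- Let K=(AP,W,δ,μ,w0) be a finite Kripke structure, k ∈ ℕ, and ρ be a track over K. If |ρ| > τ(|W|,k), where τ(|W|,k) = min{ 1+(1+|W|)^(2k+4)+|W| , 1+(k+3)^(|W|²+1)+|W| }, then there exists another track ρ' over K whose length is at most τ(|W|,k) and which has the same B_k-descriptor as ρ. -/
open Classical

universe u v

variable {AP : Type u} {W : Type v}

/-- The bound `τ(|W|, k)` on the length of track representatives. -/
def tau (w k : ℕ) : ℕ :=
  min (1 + (1 + w) ^ (2 * k + 4) + w) (1 + (k + 3) ^ (w ^ 2 + 1) + w)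

/-!
Descriptor equality is a right congruence on tracks of length at least 2. Hence, if two
prefixes `ρ[..i]` and `ρ[..i']` with `i < i'` have the same B_k-descriptor, cutting out the
segment between them gives a shorter track with the B_k-descriptor of `ρ`, and it suffices
to show that the prefixes of a track fall into fewer than `τ(|W|, k)` classes.

Let `f i` be the last state of the prefix of length `i`. Position `c` is 0-fresh if `f c` has
not occurred before, and (m+1)-fresh if every earlier occurrence of `f c` is followed by an
m-fresh position before `c`. Every prefix has the B_k-descriptor of a prefix, no longer,
whose length is (k+1)-fresh, so it remains to count fresh positions, which is done in two ways:
* `c ↦ (f c, number of m-fresh positions before c)` is injective on (m+1)-fresh positions,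
  so their number grows at most geometrically in `m`, with ratio `|W| + 1`;
* after the last 0-fresh position `q`, being (m+1)-fresh is the same as being m-fresh in the
  sequence restarted at `q + 1`, and before `q` one value fewer occurs; by induction on the
  number of values, there are fewer than `(m+2)^|W|` m-fresh positions.
-/

section Fresh

open Finset

variable {α : Type*}

def Fresh (f : ℕ → α) (a : ℕ) : ℕ → ℕ → Prop
  | 0, c => ∀ j, a ≤ j → j < c → f j ≠ f c
  | k + 1, c => ∀ j, a ≤ j → j < c → f j = f c → ∃ e, j ≤ e ∧ e < c ∧ Fresh f a k e

variable {f : ℕ → α} {a : ℕ}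

theorem Fresh.succ : ∀ {k c : ℕ}, Fresh f a k c → Fresh f a (k + 1) c
  | 0, _, h => fun j hj hjc hfj => absurd hfj (h j hj hjc)
  | _ + 1, _, h => fun j hj hjc hfj =>
      let ⟨e, hje, hec, he⟩ := h j hj hjc hfj
      ⟨e, hje, hec, he.succ⟩

theorem Fresh.mono {k k' c : ℕ} (h : Fresh f a k c) (hk : k ≤ k') : Fresh f a k' c := by
  induction hk with
  | refl => exact h
  | step _ ih => exact ih.succ

/-- After the last `0`-fresh position `q` every value is a repetition, and `q` itself separates
each such position from all occurrences of its value up to `q`. -/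
theorem fresh_succ_iff_of_isLast {q b : ℕ} (haq : a ≤ q) (hq : Fresh f a 0 q)
    (hlast : ∀ e, q < e → e < b → ¬Fresh f a 0 e) :
    ∀ k c, q < c → c < b → (Fresh f a (k + 1) c ↔ Fresh f (q + 1) k c)
  | 0, c, hqc, hcb => by
    refine ⟨fun h j hj hjc hfj => ?_, fun h j hj hjc hfj => ?_⟩
    · obtain ⟨e, hje, hec, he⟩ := h j (by omega) hjc hfj
      exact hlast e (by omega) (by omega) he
    · rcases le_or_gt j q with hjq | hqj
      · exact ⟨q, hjq, hqc, hq⟩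
      · exact absurd hfj (h j hqj hjc)
  | k + 1, c, hqc, hcb => by
    have ih := fresh_succ_iff_of_isLast haq hq hlast k
    refine ⟨fun h j hj hjc hfj => ?_, fun h j hj hjc hfj => ?_⟩
    · obtain ⟨e, hje, hec, he⟩ := h j (by omega) hjc hfj
      exact ⟨e, hje, hec, (ih e (by omega) (by omega)).1 he⟩
    · rcases le_or_gt j q with hjq | hqj
      · exact ⟨q, hjq, hqc, hq.mono (Nat.zero_le _)⟩
      · obtain ⟨e, hje, hec, he⟩ := h j hqj hjc hfj
        exact ⟨e, hje, hec, (ih e (by omega) (by omega)).2 he⟩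

theorem exists_isLast_fresh_zero {b : ℕ} (hab : a < b) :
    ∃ q, a ≤ q ∧ q < b ∧ Fresh f a 0 q ∧ ∀ e, q < e → e < b → ¬Fresh f a 0 e := by
  have hne : ((Ico a b).filter (Fresh f a 0)).Nonempty :=
    ⟨a, mem_filter.2 ⟨mem_Ico.2 ⟨le_rfl, hab⟩, fun j hj hja => absurd hja (by omega)⟩⟩
  set q := ((Ico a b).filter (Fresh f a 0)).max' hne
  obtain ⟨hq, hqf⟩ := mem_filter.1 (max'_mem _ hne)
  rw [mem_Ico] at hq
  refine ⟨q, hq.1, hq.2, hqf, fun e hqe heb he => ?_⟩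
  have := le_max' ((Ico a b).filter (Fresh f a 0)) e
    (mem_filter.2 ⟨mem_Ico.2 ⟨by omega, heb⟩, he⟩)
  omega

variable (f a)

noncomputable def freshCount (k b : ℕ) : ℕ := ((Ico a b).filter (Fresh f a k)).card

variable {f a}

theorem freshCount_mono {k c b : ℕ} (hcb : c ≤ b) : freshCount f a k c ≤ freshCount f a k b :=
  card_le_card (filter_subset_filter _ (Ico_subset_Ico_right hcb))

theorem freshCount_lt_of_fresh {k c e c' : ℕ} (hac : a ≤ c) (hce : c ≤ e) (hec' : e < c')
    (he : Fresh f a k e) : freshCount f a k c < freshCount f a k c' := by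
  refine card_lt_card ((ssubset_iff_of_subset ?_).2 ⟨e, ?_, ?_⟩)
  · exact filter_subset_filter _ (Ico_subset_Ico_right (by omega))
  · exact mem_filter.2 ⟨mem_Ico.2 ⟨by omega, hec'⟩, he⟩
  · simp only [mem_filter, mem_Ico]
    omega

theorem freshCount_zero_le (b : ℕ) : freshCount f a 0 b ≤ ((Ico a b).image f).card := by
  refine card_le_card_of_injOn f (fun c hc => mem_image_of_mem f (mem_filter.1 hc).1) ?_
  intro c hc c' hc' hfc
  simp only [mem_coe, mem_filter, mem_Ico] at hc hc'
  by_contra hne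
  rcases Nat.lt_or_gt_of_ne hne with hlt | hlt
  · exact hc'.2 c hc.1.1 hlt hfc
  · exact hc.2 c' hc'.1.1 hlt hfc.symm

theorem freshCount_succ_le (k b : ℕ) :
    freshCount f a (k + 1) b ≤ ((Ico a b).image f).card * (freshCount f a k b + 1) := by
  have key : ∀ {c c'}, c ∈ (Ico a b).filter (Fresh f a (k + 1)) →
      c' ∈ (Ico a b).filter (Fresh f a (k + 1)) → c < c' → f c = f c' →
      freshCount f a k c < freshCount f a k c' := by
    intro c c' hc hc' hlt hfc
    simp only [mem_filter, mem_Ico] at hc hc'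
    obtain ⟨e, hce, hec', he⟩ := hc'.2 c hc.1.1 hlt hfc
    exact freshCount_lt_of_fresh hc.1.1 hce hec' he
  calc freshCount f a (k + 1) b
      ≤ ((Ico a b).image f ×ˢ range (freshCount f a k b + 1)).card := by
        refine card_le_card_of_injOn (fun c => (f c, freshCount f a k c)) ?_ ?_
        · intro c hc
          have hcb := (mem_Ico.1 (mem_filter.1 hc).1).2
          simp only [coe_product, coe_range, Set.mem_prod, mem_coe, Set.mem_Iio]
          exact ⟨mem_image_of_mem f (mem_filter.1 hc).1,
            Nat.lt_succ_of_le (freshCount_mono hcb.le)⟩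
        · intro c hc c' hc' hcc'
          simp only [Prod.mk.injEq] at hcc'
          by_contra hne
          rcases Nat.lt_or_gt_of_ne hne with hlt | hlt
          · exact (key hc hc' hlt hcc'.1).ne hcc'.2
          · exact (key hc' hc hlt hcc'.1.symm).ne hcc'.2.symm
    _ = _ := by rw [card_product, card_range]

theorem freshCount_add_one_le_pow_succ {s b : ℕ} (hs : ((Ico a b).image f).card ≤ s) (k : ℕ) :
    freshCount f a k b + 1 ≤ (s + 1) ^ (k + 1) := by
  induction k with
  | zero => simpa using (freshCount_zero_le b).trans hs
  | succ k ih =>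
    have hpos : 1 ≤ (s + 1) ^ (k + 1) := Nat.one_le_pow _ _ (Nat.succ_pos s)
    calc freshCount f a (k + 1) b + 1 ≤ s * (freshCount f a k b + 1) + 1 := by
          have := (freshCount_succ_le k b).trans (Nat.mul_le_mul_right _ hs)
          omega
      _ ≤ s * (s + 1) ^ (k + 1) + (s + 1) ^ (k + 1) := by gcongr
      _ = (s + 1) ^ (k + 2) := by ring

theorem freshCount_le_of_split {k q b : ℕ} (haq : a ≤ q) (hqb : q < b) :
    freshCount f a k b ≤
      freshCount f a k q + 1 + ((Ico (q + 1) b).filter (Fresh f a k)).card := by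
  have hsplit : Ico a b = Ico a q ∪ insert q (Ico (q + 1) b) := by
    ext c
    simp only [mem_Ico, mem_union, mem_insert]
    omega
  have hins : ((insert q (Ico (q + 1) b)).filter (Fresh f a k)).card ≤
      ((Ico (q + 1) b).filter (Fresh f a k)).card + 1 := by
    rw [filter_insert]
    split_ifs
    · exact card_insert_le _ _
    · omega
  calc freshCount f a k b
      ≤ freshCount f a k q + ((insert q (Ico (q + 1) b)).filter (Fresh f a k)).card := by
        rw [freshCount, hsplit, filter_union]
        exact card_union_le _ _
    _ ≤ _ := by omega

theorem card_image_Ico_lt_of_fresh_zero {q b : ℕ} (haq : a ≤ q) (hqb : q < b)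
    (hq : Fresh f a 0 q) : ((Ico a q).image f).card < ((Ico a b).image f).card := by
  refine card_lt_card ((ssubset_iff_of_subset ?_).2 ⟨f q, ?_, ?_⟩)
  · exact image_subset_image (Ico_subset_Ico_right hqb.le)
  · exact mem_image_of_mem f (mem_Ico.2 ⟨haq, hqb⟩)
  · simp only [mem_image, mem_Ico, not_exists, not_and]
    exact fun j hj => hq j hj.1 hj.2

theorem freshCount_add_one_le_pow_of_card_image_le (k : ℕ) :
    ∀ s a b, ((Ico a b).image f).card ≤ s → freshCount f a k b + 1 ≤ (k + 2) ^ s := by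
  induction k with
  | zero =>
    intro s a b hs
    have := (freshCount_zero_le (f := f) (a := a) b).trans hs
    have := Nat.lt_two_pow_self (n := s)
    simp only [zero_add]
    omega
  | succ k ihk =>
    intro s
    induction s with
    | zero =>
      intro a b hs
      have hempty : Ico a b = ∅ := by simpa using hs
      simp [freshCount, hempty]
    | succ s ihs =>
      intro a b hs
      rcases le_or_gt b a with hba | hab
      · simpa [freshCount, Ico_eq_empty_of_le hba] using Nat.one_le_pow _ _ (by omega)
      obtain ⟨q, haq, hqb, hq, hlast⟩ := exists_isLast_fresh_zero (f := f) hab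
      have hfrontValues : ((Ico a q).image f).card ≤ s := by
        have := card_image_Ico_lt_of_fresh_zero haq hqb hq
        omega
      have htailValues : ((Ico (q + 1) b).image f).card ≤ s + 1 :=
        (card_le_card (image_subset_image (Ico_subset_Ico_left (by omega)))).trans hs
      have hshift : (Ico (q + 1) b).filter (Fresh f a (k + 1)) =
          (Ico (q + 1) b).filter (Fresh f (q + 1) k) :=
        filter_congr fun c hc => by
          rw [mem_Ico] at hc
          exact fresh_succ_iff_of_isLast haq hq hlast k c (by omega) hc.2
      have hfrontCount := ihs a q hfrontValues
      have htailCount := ihk (s + 1) (q + 1) b htailValues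
      have hsplit := freshCount_le_of_split (f := f) (k := k + 1) haq hqb
      rw [hshift] at hsplit
      have hpow : (k + 2) ^ (s + 1) ≤ (k + 2) * (k + 3) ^ s := by
        rw [pow_succ']
        gcongr
        omega
      rw [show k + 1 + 2 = k + 3 by rfl] at hfrontCount ⊢
      calc freshCount f a (k + 1) b + 1 ≤ (k + 3) ^ s + (k + 2) * (k + 3) ^ s := by
            simp only [freshCount] at hfrontCount htailCount hsplit ⊢
            omega
        _ = (k + 3) ^ (s + 1) := by ring

end Fresh

section Descriptors

def BDesc.trunc : {k : ℕ} → BDesc W (k + 1) → BDesc W k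
  | 0, d => d.1
  | _ + 1, d => (d.1, BDesc.trunc '' d.2)

theorem properPrefix_iff_s16 {σ τ : List W} :
    ProperPrefix σ τ ↔ ∃ j, 2 ≤ j ∧ j < τ.length ∧ σ = τ.take j := by
  constructor
  · rintro ⟨hpre, hne, h2⟩
    refine ⟨σ.length, h2, lt_of_le_of_ne hpre.length_le fun hlen => hne ?_,
      List.prefix_iff_eq_take.1 hpre⟩
    rw [List.prefix_iff_eq_take.1 hpre, hlen, List.take_length]
  · rintro ⟨j, h2, hj, rfl⟩
    refine ⟨List.take_prefix _ _, fun h => ?_, by simp; omega⟩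
    have := congrArg List.length h
    simp only [List.length_take] at this
    omega

variable [Nonempty W]

def prefixDescs (k : ℕ) (σ : List W) : Set (BDesc W k) :=
  {d | ∃ p, ProperPrefix p σ ∧ d = bDesc k p}

theorem bDesc_succ (k : ℕ) (σ : List W) : bDesc (k + 1) σ = (descEl σ, prefixDescs k σ) := rfl

theorem trunc_bDesc : ∀ (k : ℕ) (σ : List W), (bDesc (k + 1) σ).trunc = bDesc k σ
  | 0, _ => rfl
  | k + 1, σ => by
    refine Prod.ext rfl ?_
    change BDesc.trunc '' prefixDescs (k + 1) σ = prefixDescs k σ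
    ext d
    simp only [prefixDescs, Set.mem_image, Set.mem_ofPred_eq]
    constructor
    · rintro ⟨_, ⟨p, hp, rfl⟩, rfl⟩
      exact ⟨p, hp, trunc_bDesc k p⟩
    · rintro ⟨p, hp, rfl⟩
      exact ⟨_, ⟨p, hp, rfl⟩, trunc_bDesc k p⟩

theorem descEl_eq_of_bDesc_eq_s16 {k : ℕ} {σ σ' : List W} (h : bDesc k σ = bDesc k σ') :
    descEl σ = descEl σ' := by
  cases k with
  | zero => exact h
  | succ k => exact congrArg Prod.fst h

theorem prefixDescs_eq_image (k : ℕ) (τ : List W) :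
    prefixDescs k τ = (fun j => bDesc k (τ.take j)) '' Set.Ico 2 τ.length := by
  ext d
  simp only [prefixDescs, properPrefix_iff_s16, Set.mem_image, Set.mem_Ico, Set.mem_ofPred_eq]
  constructor
  · rintro ⟨_, ⟨j, h2, hj, rfl⟩, rfl⟩
    exact ⟨j, ⟨h2, hj⟩, rfl⟩
  · rintro ⟨j, ⟨h2, hj⟩, rfl⟩
    exact ⟨_, ⟨j, h2, hj, rfl⟩, rfl⟩

theorem prefixDescs_take (k : ℕ) {ρ : List W} {i : ℕ} (hi : i ≤ ρ.length) :
    prefixDescs k (ρ.take i) = (fun j => bDesc k (ρ.take j)) '' Set.Ico 2 i := by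
  rw [prefixDescs_eq_image, List.length_take, min_eq_left hi]
  refine Set.image_congr fun j hj => ?_
  rw [List.take_take, min_eq_left (Set.mem_Ico.1 hj).2.le]

theorem prefixDescs_append_singleton (k : ℕ) {σ : List W} (hσ : 2 ≤ σ.length) (a : W) :
    prefixDescs k (σ ++ [a]) = insert (bDesc k σ) (prefixDescs k σ) := by
  have hIco : Set.Ico 2 (σ ++ [a]).length = insert σ.length (Set.Ico 2 σ.length) := by
    ext j
    simp only [List.length_append, List.length_singleton, Set.mem_Ico, Set.mem_insert_iff]
    omega
  rw [prefixDescs_eq_image, prefixDescs_eq_image, hIco, Set.image_insert_eq,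
    List.take_append_of_le_length le_rfl, List.take_length]
  congr 1
  refine Set.image_congr fun j hj => ?_
  rw [List.take_append_of_le_length (Set.mem_Ico.1 hj).2.le]

theorem lastW_eq_getLast {σ : List W} (h : σ ≠ []) : lastW σ = σ.getLast h := by
  rw [lastW, List.getLastD_eq_getLast?, List.getLast?_eq_some_getLast h, Option.getD_some]

theorem headW_append_s16 {σ : List W} (h : σ ≠ []) (π : List W) : headW (σ ++ π) = headW σ := by
  obtain ⟨x, σ, rfl⟩ := List.exists_cons_of_ne_nil h
  rfl

theorem lastW_append_singleton (σ : List W) (a : W) : lastW (σ ++ [a]) = a :=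
  List.getLastD_concat

theorem intStates_append_singleton {σ : List W} (hσ : 2 ≤ σ.length) (a : W) :
    intStates (σ ++ [a]) = insert (lastW σ) (intStates σ) := by
  have hne : σ.drop 1 ≠ [] := by rw [Ne, List.drop_eq_nil_iff]; omega
  ext w
  simp only [intStates, Set.mem_ofPred_eq, Set.mem_insert_iff]
  rw [List.drop_append_of_le_length (by omega), List.dropLast_concat,
    ← List.dropLast_append_getLast hne, List.getLast_drop,
    lastW_eq_getLast (List.ne_nil_of_drop_ne_nil hne)]
  simp [or_comm]

theorem descEl_append_singleton {σ : List W} (hσ : 2 ≤ σ.length) (a : W) :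
    descEl (σ ++ [a]) = (headW σ, insert (lastW σ) (intStates σ), a) := by
  rw [descEl, headW_append_s16 (List.ne_nil_of_length_pos (by omega)),
    intStates_append_singleton hσ, lastW_append_singleton]

theorem bDesc_append_singleton_congr {k : ℕ} {σ σ' : List W} (h : bDesc k σ = bDesc k σ')
    (hσ : 2 ≤ σ.length) (hσ' : 2 ≤ σ'.length) (a : W) :
    bDesc k (σ ++ [a]) = bDesc k (σ' ++ [a]) := by
  have hroot : descEl (σ ++ [a]) = descEl (σ' ++ [a]) := by
    have := descEl_eq_of_bDesc_eq_s16 h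
    simp only [descEl, Prod.mk.injEq] at this
    rw [descEl_append_singleton hσ, descEl_append_singleton hσ', this.1, this.2.1, this.2.2]
  cases k with
  | zero => exact hroot
  | succ k =>
    have hprefix : prefixDescs k σ = prefixDescs k σ' := congrArg Prod.snd h
    have htrunc : bDesc k σ = bDesc k σ' := by rw [← trunc_bDesc, h, trunc_bDesc]
    rw [bDesc_succ, bDesc_succ, prefixDescs_append_singleton k hσ,
      prefixDescs_append_singleton k hσ', hroot, hprefix, htrunc]

theorem bDesc_append_congr {k : ℕ} (π : List W) :
    ∀ {σ σ' : List W}, bDesc k σ = bDesc k σ' → 2 ≤ σ.length → 2 ≤ σ'.length →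
      bDesc k (σ ++ π) = bDesc k (σ' ++ π) := by
  induction π with
  | nil => exact fun h _ _ => by simpa using h
  | cons a π ih =>
    intro σ σ' h hσ hσ'
    rw [← List.singleton_append, ← List.append_assoc, ← List.append_assoc]
    exact ih (bDesc_append_singleton_congr h hσ hσ' a) (by simp; omega) (by simp; omega)

end Descriptors

section Prefixes

variable [Nonempty W]

theorem getLast?_eq_some_lastW_s16 {σ : List W} (h : σ ≠ []) : σ.getLast? = some (lastW σ) := by
  rw [lastW_eq_getLast h, List.getLast?_eq_some_getLast h]

theorem IsTrack.take_append_drop {K : KripkeStructure AP W} {ρ : List W} (hρ : IsTrack K ρ)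
    {i i' : ℕ} (h2 : 2 ≤ i) (hii' : i ≤ i') (hi' : i' ≤ ρ.length)
    (hlast : lastW (ρ.take i) = lastW (ρ.take i')) : IsTrack K (ρ.take i ++ ρ.drop i') := by
  have hchain : (ρ.take i' ++ ρ.drop i').IsChain K.delta := by
    rw [List.take_append_drop]
    exact hρ.2
  obtain ⟨-, hdrop, hjoin⟩ := List.isChain_append.1 hchain
  have hne : ∀ j, 2 ≤ j → j ≤ ρ.length → ρ.take j ≠ [] := fun j hj hjρ =>
    List.ne_nil_of_length_pos (by simp; omega)
  refine ⟨by simp; omega, List.isChain_append.2 ⟨hρ.2.take i, hdrop, ?_⟩⟩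
  rwa [getLast?_eq_some_lastW_s16 (hne i h2 (by omega)), hlast,
    ← getLast?_eq_some_lastW_s16 (hne i' (by omega) hi')]

theorem exists_shorter_of_bDesc_take_eq {K : KripkeStructure AP W} {k : ℕ} {ρ : List W}
    (hρ : IsTrack K ρ) {i i' : ℕ} (h2 : 2 ≤ i) (hii' : i < i') (hi' : i' ≤ ρ.length)
    (h : bDesc k (ρ.take i) = bDesc k (ρ.take i')) :
    ∃ ρ', IsTrack K ρ' ∧ ρ'.length < ρ.length ∧ bDesc k ρ' = bDesc k ρ := by
  refine ⟨ρ.take i ++ ρ.drop i',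
    hρ.take_append_drop h2 hii'.le hi' (congrArg (·.2.2) (descEl_eq_of_bDesc_eq_s16 h)),
    by simp; omega, ?_⟩
  rw [bDesc_append_congr _ h (by simp; omega) (by simp; omega), List.take_append_drop]

noncomputable def prefixEnd (ρ : List W) (i : ℕ) : W := lastW (ρ.take i)

theorem headW_take (ρ : List W) {i : ℕ} (hi : 1 ≤ i) : headW (ρ.take i) = headW ρ := by
  obtain ⟨i, rfl⟩ := Nat.exists_eq_add_of_le' hi
  cases ρ <;> rfl

theorem intStates_take {ρ : List W} {i : ℕ} (h2 : 2 ≤ i) (hi : i ≤ ρ.length) :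
    intStates (ρ.take i) = prefixEnd ρ '' Set.Ico 2 i := by
  induction i, h2 using Nat.le_induction with
  | base =>
    obtain ⟨x, y, ρ, rfl⟩ : ∃ x y ρ', ρ = x :: y :: ρ' := by
      match ρ, hi with
      | x :: y :: ρ', _ => exact ⟨x, y, ρ', rfl⟩
    simp [intStates]
  | succ i h2 ih =>
    have hIco : Set.Ico 2 (i + 1) = insert i (Set.Ico 2 i) := by
      ext j
      simp only [Set.mem_Ico, Set.mem_insert_iff]
      omega
    rw [List.take_add_one, List.getElem?_eq_getElem (by omega), Option.toList_some,
      intStates_append_singleton (by simp; omega), ih (by omega), hIco, Set.image_insert_eq]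
    rfl

theorem descEl_take {ρ : List W} {i : ℕ} (h2 : 2 ≤ i) (hi : i ≤ ρ.length) :
    descEl (ρ.take i) = (headW ρ, prefixEnd ρ '' Set.Ico 2 i, prefixEnd ρ i) := by
  rw [descEl, headW_take ρ (by omega), intStates_take h2 hi]
  rfl

theorem image_Ico_eq_of_forall_exists_lt {β : Type*} {g : ℕ → β} {a i i' : ℕ} (hii' : i ≤ i')
    (h : ∀ c, i ≤ c → c < i' → ∃ j, a ≤ j ∧ j < c ∧ g j = g c) :
    g '' Set.Ico a i = g '' Set.Ico a i' := by
  induction i', hii' using Nat.le_induction with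
  | base => rfl
  | succ i' hii' ih =>
    obtain ⟨j, hja, hji', hgj⟩ := h i' hii' (Nat.lt_succ_self i')
    have hIco : Set.Ico a (i' + 1) = insert i' (Set.Ico a i') := by
      ext c
      simp only [Set.mem_Ico, Set.mem_insert_iff]
      omega
    rw [ih fun c hic hci' => h c hic (by omega), hIco, Set.image_insert_eq,
      Set.insert_eq_of_mem (show g i' ∈ g '' Set.Ico a i' from ⟨j, ⟨hja, hji'⟩, hgj⟩)]

theorem bDesc_take_eq_of_forall_not_fresh {ρ : List W} :
    ∀ (k : ℕ) {j i : ℕ}, 2 ≤ j → j ≤ i → i ≤ ρ.length → prefixEnd ρ j = prefixEnd ρ i →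
      (∀ c, j ≤ c → c < i → ¬Fresh (prefixEnd ρ) 2 k c) →
      bDesc k (ρ.take j) = bDesc k (ρ.take i)
  | 0, j, i, h2, hji, hi, hend, hstale => by
    have hseen : prefixEnd ρ '' Set.Ico 2 j = prefixEnd ρ '' Set.Ico 2 i :=
      image_Ico_eq_of_forall_exists_lt hji fun c hjc hci => by
        simpa [Fresh] using hstale c hjc hci
    rw [bDesc, bDesc, descEl_take h2 (by omega), descEl_take (by omega) hi, hseen, hend]
  | k + 1, j, i, h2, hji, hi, hend, hstale => by
    have hroot : descEl (ρ.take j) = descEl (ρ.take i) :=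
      bDesc_take_eq_of_forall_not_fresh 0 h2 hji hi hend fun c hjc hci h0 =>
        hstale c hjc hci (h0.mono (Nat.zero_le _))
    have hseen : (fun c => bDesc k (ρ.take c)) '' Set.Ico 2 j =
        (fun c => bDesc k (ρ.take c)) '' Set.Ico 2 i :=
      image_Ico_eq_of_forall_exists_lt hji fun c hjc hci => by
        have := hstale c hjc hci
        simp only [Fresh, not_forall, not_exists, not_and] at this
        obtain ⟨j', hj', hj'c, hend', hstale'⟩ := this
        exact ⟨j', hj', hj'c, bDesc_take_eq_of_forall_not_fresh k hj' hj'c.le (by omega) hend'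
          fun e hje hec => hstale' e hje hec⟩
    rw [bDesc_succ, bDesc_succ, hroot, prefixDescs_take k (by omega), prefixDescs_take k hi,
      hseen]

theorem card_image_bDesc_take_le_freshCount (k : ℕ) (ρ : List W) :
    ((Finset.Ico 2 (ρ.length + 1)).image fun i => bDesc k (ρ.take i)).card ≤
      freshCount (prefixEnd ρ) 2 (k + 1) (ρ.length + 1) := by
  set fresh := (Finset.Ico 2 (ρ.length + 1)).filter (Fresh (prefixEnd ρ) 2 (k + 1))
  refine (Finset.card_le_card (t := fresh.image fun i => bDesc k (ρ.take i)) ?_).trans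
    Finset.card_image_le
  intro d hd
  obtain ⟨i, hi, rfl⟩ := Finset.mem_image.1 hd
  clear hd
  induction i using Nat.strong_induction_on with
  | _ i ih =>
    rw [Finset.mem_Ico] at hi
    by_cases hfresh : Fresh (prefixEnd ρ) 2 (k + 1) i
    · exact Finset.mem_image_of_mem _ (Finset.mem_filter.2 ⟨Finset.mem_Ico.2 hi, hfresh⟩)
    simp only [Fresh, not_forall, not_exists, not_and] at hfresh
    obtain ⟨j, hj, hji, hend, hstale⟩ := hfresh
    rw [← bDesc_take_eq_of_forall_not_fresh k hj hji.le (by omega) hend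
      fun e hje hei => hstale e hje hei]
    exact ih j hji (Finset.mem_Ico.2 ⟨hj, by omega⟩)

theorem card_image_bDesc_take_lt_tau [Fintype W] (k : ℕ) (ρ : List W) :
    ((Finset.Ico 2 (ρ.length + 1)).image fun i => bDesc k (ρ.take i)).card <
      tau (Fintype.card W) k := by
  set w := Fintype.card W
  have hvalues : ((Finset.Ico 2 (ρ.length + 1)).image (prefixEnd ρ)).card ≤ w :=
    Finset.card_le_univ _
  have hcount := card_image_bDesc_take_le_freshCount k ρ
  have hexp := freshCount_add_one_le_pow_succ hvalues (k + 1)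
  have hpoly := freshCount_add_one_le_pow_of_card_image_le (k + 1) w 2 _ hvalues
  have hexp' : (w + 1) ^ (k + 1 + 1) ≤ (1 + w) ^ (2 * k + 4) := by
    rw [add_comm w 1]
    exact Nat.pow_le_pow_right (by omega) (by omega)
  have hpoly' : (k + 1 + 2) ^ w ≤ (k + 3) ^ (w ^ 2 + 1) :=
    Nat.pow_le_pow_right (by omega) (by nlinarith)
  rw [tau, lt_min_iff]
  omega

theorem exists_shorter_of_tau_lt [Fintype W] {K : KripkeStructure AP W} {k : ℕ} {ρ : List W}
    (hρ : IsTrack K ρ) (hlen : tau (Fintype.card W) k < ρ.length) :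
    ∃ ρ', IsTrack K ρ' ∧ ρ'.length < ρ.length ∧ bDesc k ρ' = bDesc k ρ := by
  have hcard : ((Finset.Ico 2 (ρ.length + 1)).image fun i => bDesc k (ρ.take i)).card <
      (Finset.Ico 2 (ρ.length + 1)).card := by
    have := card_image_bDesc_take_lt_tau k ρ
    rw [Nat.card_Ico]
    omega
  obtain ⟨i, hi, i', hi', hne, h⟩ :=
    Finset.exists_ne_map_eq_of_card_lt_of_maps_to hcard fun i hi => Finset.mem_image_of_mem _ hi
  rw [Finset.mem_Ico] at hi hi'
  rcases Nat.lt_or_gt_of_ne hne with hlt | hlt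
  · exact exists_shorter_of_bDesc_take_eq hρ hi.1 hlt (by omega) h
  · exact exists_shorter_of_bDesc_take_eq hρ hi'.1 hlt (by omega) h.symm

end Prefixes

theorem track_representative_general [Fintype W] [Nonempty W] (K : KripkeStructure AP W)
    (k : ℕ) (ρ : List W) (hρ : IsTrack K ρ) :
    ∃ ρ' : List W, IsTrack K ρ' ∧ ρ'.length ≤ tau (Fintype.card W) k ∧
      bDesc k ρ' = bDesc k ρ := by
  induction hn : ρ.length using Nat.strong_induction_on generalizing ρ with
  | _ n ih =>
    by_cases hshort : ρ.length ≤ tau (Fintype.card W) k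
    · exact ⟨ρ, hρ, hshort, rfl⟩
    obtain ⟨σ, hσ, hσρ, hσeq⟩ := exists_shorter_of_tau_lt hρ (not_le.1 hshort)
    obtain ⟨ρ', hρ', hlen', heq'⟩ := ih σ.length (hn ▸ hσρ) σ hσ rfl
    exact ⟨ρ', hρ', hlen', heq'.trans hσeq⟩

/-- every track longer than `τ(|W|, k)` has the same B_k-descriptor as
some track of length at most `τ(|W|, k)`. -/
theorem track_representative [Fintype W] [Nonempty W] (K : KripkeStructure AP W)
    (k : ℕ) (ρ : List W) (hρ : IsTrack K ρ)
    (hlen : tau (Fintype.card W) k < ρ.length) :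
    ∃ ρ' : List W, IsTrack K ρ' ∧ ρ'.length ≤ tau (Fintype.card W) k ∧
      bDesc k ρ' = bDesc k ρ :=
  track_representative_general K k ρ hρ
end
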